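/- The Z-module Z/pZ ⊕ Z/p²Z (p prime) is lifting, hence every direct summand of it is H-supplemented, but it does not satisfy condition (D3). -/

import Mathlib

universe u v

/-- `N` is a small (superfluous) submodule of `M`. -/
def SmallSub (R : Type v) [Ring R] {M : Type u} [AddCommGroup M] [Module R M]
    (N : Submodule R M) : Prop :=
  ∀ X : Submodule R M, N ⊔ X = ⊤ → X = ⊤

/-- `D` is a direct summand of `M`. -/
def IsDirectSummand (R : Type v) [Ring R] {M : Type u} [AddCommGroup M] [Module R M]
    (D : Submodule R M) : Prop :=
  ∃ D' : Submodule R M, IsCompl D D'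

/-- `M` is H-supplemented: for every submodule `X` there is a direct summand `D`
with `(X+D)/D ≪ M/D` and `(X+D)/X ≪ M/X`. -/
def HSupplemented (R : Type v) [Ring R] (M : Type u) [AddCommGroup M] [Module R M] : Prop :=
  ∀ X : Submodule R M, ∃ D : Submodule R M, IsDirectSummand R D ∧
    SmallSub R ((X ⊔ D).map D.mkQ) ∧ SmallSub R ((X ⊔ D).map X.mkQ)

/-- Condition (D3). -/
def CondD3 (R : Type v) [Ring R] (M : Type u) [AddCommGroup M] [Module R M] : Prop :=
  ∀ K L : Submodule R M, IsDirectSummand R K → IsDirectSummand R L → K ⊔ L = ⊤ →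
    IsDirectSummand R (K ⊓ L)

/-- `M` is a lifting module. -/
def Lifting (R : Type v) [Ring R] (M : Type u) [AddCommGroup M] [Module R M] : Prop :=
  ∀ N : Submodule R M, ∃ K : Submodule R M, IsDirectSummand R K ∧ K ≤ N ∧
    SmallSub R (N.map K.mkQ)

/-
The radical `S = p • M = 0 ⊕ pℤ/p²ℤ` of `M = ℤ/p ⊕ ℤ/p²` is small, and every submodule `N`
contains a direct summand `K` (namely `0`, `M`, or a cyclic summand generated by an element
`(e, 1)` or `(1, p t)` of `N`) with `N ≤ K + S`; this makes `M` lifting. Lifting passes to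
direct summands and implies H-supplemented. Finally `⟨(0, 1)⟩` and `⟨(1, 1)⟩` are summands
with sum `M` whose intersection is the nonzero small submodule `S`, which cannot be a summand.
-/

open Submodule

section SmallSub

variable {R : Type*} [Ring R] {M N : Type*} [AddCommGroup M] [Module R M]
  [AddCommGroup N] [Module R N]

theorem smallSub_bot : SmallSub R (⊥ : Submodule R M) := fun X hX => by simpa using hX

theorem SmallSub.mono {A B : Submodule R M} (hB : SmallSub R B) (h : A ≤ B) : SmallSub R A :=
  fun X hX => hB X (top_le_iff.mp (hX ▸ sup_le_sup_right h X))

theorem SmallSub.map {A : Submodule R M} (hA : SmallSub R A) (f : M →ₗ[R] N) :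
    SmallSub R (A.map f) := by
  intro X hX
  have hpre : A ⊔ X.comap f = ⊤ := by
    refine eq_top_iff.mpr fun m _ => ?_
    have hfm : f m ∈ A.map f ⊔ X := hX ▸ mem_top
    obtain ⟨_, ⟨a, ha, rfl⟩, x, hx, hax⟩ := mem_sup.mp hfm
    refine mem_sup.mpr ⟨a, ha, m - a, ?_, add_sub_cancel a m⟩
    simpa [← hax] using hx
  have hrange : LinearMap.range f ≤ X := by
    rw [← Submodule.map_top, ← hA _ hpre]
    exact map_comap_le f X
  exact eq_top_iff.mpr (hX ▸ sup_le (LinearMap.map_le_range.trans hrange) le_rfl)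

theorem SmallSub.eq_bot_of_isDirectSummand {A : Submodule R M} (hA : SmallSub R A)
    (hd : IsDirectSummand R A) : A = ⊥ := by
  obtain ⟨C, hC⟩ := hd
  simpa [hA C hC.codisjoint.eq_top] using hC.disjoint.eq_bot

theorem SmallSub.map_mkQ_of_le_sup {S K N : Submodule R M} (hS : SmallSub R S)
    (hN : N ≤ K ⊔ S) : SmallSub R (N.map K.mkQ) :=
  (hS.map K.mkQ).mono <| calc
    N.map K.mkQ ≤ (K ⊔ S).map K.mkQ := map_mono hN
    _ = S.map K.mkQ := by rw [Submodule.map_sup, mkQ_map_self, bot_sup_eq]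

end SmallSub

section Lifting

variable {R : Type*} [Ring R] {M : Type*} [AddCommGroup M] [Module R M]

theorem lifting_of_forall_exists_le_sup {S : Submodule R M} (hS : SmallSub R S)
    (h : ∀ N : Submodule R M, ∃ K, IsDirectSummand R K ∧ K ≤ N ∧ N ≤ K ⊔ S) :
    Lifting R M := fun N =>
  let ⟨K, hK, hKN, hNK⟩ := h N
  ⟨K, hK, hKN, hS.map_mkQ_of_le_sup hNK⟩

theorem Lifting.hSupplemented (h : Lifting R M) : HSupplemented R M := by
  intro X
  obtain ⟨K, hK, hKX, hsmall⟩ := h X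
  refine ⟨K, hK, ?_, ?_⟩
  · rwa [sup_eq_left.mpr hKX]
  · rw [sup_eq_left.mpr hKX, mkQ_map_self]
    exact smallSub_bot

theorem IsDirectSummand.comap_subtype {K D : Submodule R M} (hK : IsDirectSummand R K)
    (hKD : K ≤ D) : IsDirectSummand R (K.comap D.subtype) :=
  let ⟨C, hC⟩ := hK
  ⟨C.comap D.subtype, isCompl_comap_subtype_of_isCompl_of_le hC hKD⟩

theorem Lifting.of_isDirectSummand (hM : Lifting R M) {D : Submodule R M}
    (hD : IsDirectSummand R D) : Lifting R D := by
  obtain ⟨C, hDC⟩ := hD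
  intro X
  obtain ⟨K, hK, hKX, hsmall⟩ := hM (X.map D.subtype)
  have hKD : K ≤ D := hKX.trans (map_subtype_le D X)
  refine ⟨K.comap D.subtype, hK.comap_subtype hKD, ?_, ?_⟩
  · calc K.comap D.subtype ≤ (X.map D.subtype).comap D.subtype := comap_mono hKX
      _ = X := comap_map_eq_of_injective D.injective_subtype X
  -- the projection onto `D` along `C` induces `M ⧸ K → D ⧸ K`, carrying the image of `X` to itself
  · set π := D.projectionOnto C hDC
    have hπ : π ∘ₗ D.subtype = LinearMap.id := projectionOnto_comp_subtype hDC
    have hπK : K ≤ (K.comap D.subtype).comap π := fun k hk => by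
      simpa [π, projection_apply_of_mem_left hDC (hKD hk)] using hk
    convert hsmall.map (K.mapQ _ π hπK) using 1
    rw [← map_comp, mapQ_mkQ, ← map_comp, LinearMap.comp_assoc, hπ, LinearMap.comp_id]

end Lifting

theorem Submodule.isCompl_span_singleton {R M : Type*} [Ring R] [AddCommGroup M] [Module R M]
    {u v : M} (hdisj : ∀ a b : R, a • u = b • v → a • u = 0)
    (hspan : ∀ m, ∃ a b : R, a • u + b • v = m) : IsCompl (R ∙ u) (R ∙ v) := by
  refine ⟨disjoint_def.mpr fun x hu hv => ?_, codisjoint_iff.mpr (eq_top_iff.mpr fun m _ => ?_)⟩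
  · obtain ⟨a, rfl⟩ := mem_span_singleton.mp hu
    obtain ⟨b, hb⟩ := mem_span_singleton.mp hv
    exact hdisj a b hb.symm
  · obtain ⟨a, b, rfl⟩ := hspan m
    exact add_mem_sup (smul_mem _ a (mem_span_singleton_self u))
      (smul_mem _ b (mem_span_singleton_self v))

namespace ZModProd

variable {p : ℕ}

theorem natCast_mul_self : (p : ZMod (p ^ 2)) * p = 0 := by
  rw [← Nat.cast_mul, ← sq, ZMod.natCast_self]

theorem intCast_eq_zero_of_sq {a : ℤ} (h : (a : ZMod (p ^ 2)) = 0) : (a : ZMod p) = 0 := by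
  simpa using congrArg (ZMod.castHom (dvd_pow_self p two_ne_zero) (ZMod p)) h

/-- The radical `p • M` of `M = ℤ/p ⊕ ℤ/p²`. -/
def rad (p : ℕ) : Submodule ℤ (ZMod p × ZMod (p ^ 2)) := ℤ ∙ (0, (p : ZMod (p ^ 2)))

theorem mk_zero_mul_mem_rad (t : ZMod (p ^ 2)) :
    ((0 : ZMod p), (p : ZMod (p ^ 2)) * t) ∈ rad p := by
  obtain ⟨k, rfl⟩ := ZMod.intCast_surjective t
  exact mem_span_singleton.mpr ⟨k, by ext <;> simp [mul_comm]⟩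

theorem smallSub_rad : SmallSub ℤ (rad p) := by
  intro X hX
  have hpX : (p : ℤ) • ((0 : ZMod p), (1 : ZMod (p ^ 2))) ∈ X := by
    have h01 : ((0 : ZMod p), (1 : ZMod (p ^ 2))) ∈ rad p ⊔ X := hX ▸ mem_top
    obtain ⟨s, hs, x, hx, hsx⟩ := mem_sup.mp h01
    obtain ⟨k, rfl⟩ := mem_span_singleton.mp hs
    have hps : (p : ℤ) • k • ((0 : ZMod p), (p : ZMod (p ^ 2))) = 0 := by
      ext <;> simp [mul_left_comm _ (k : ZMod (p ^ 2)), natCast_mul_self]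
    rw [← hsx, smul_add, hps, zero_add]
    exact X.smul_mem _ hx
  have hradX : rad p ≤ X := span_le.mpr <| Set.singleton_subset_iff.mpr <| by
    simpa using hpX
  rwa [sup_eq_right.mpr hradX] at hX

section Prime

variable [hp : Fact p.Prime]

theorem exists_eq_mul_of_not_isUnit {b : ZMod (p ^ 2)} (hb : ¬IsUnit b) :
    ∃ t : ZMod (p ^ 2), b = (p : ZMod (p ^ 2)) * t := by
  rw [← ZMod.natCast_zmod_val b, ZMod.isUnit_natCast_iff_not_dvd_pow hp.out two_pos,
    not_not] at hb
  obtain ⟨n, hn⟩ := hb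
  exact ⟨n, by rw [← ZMod.natCast_zmod_val b, hn, Nat.cast_mul]⟩

theorem isCompl_span_mk_one (e : ZMod p) :
    IsCompl (ℤ ∙ ((e, 1) : ZMod p × ZMod (p ^ 2))) (ℤ ∙ (1, 0)) := by
  refine isCompl_span_singleton (fun a b hab => ?_) fun m => ?_
  · have ha : (a : ZMod (p ^ 2)) = 0 := by simpa using (congrArg Prod.snd hab)
    ext <;> simp [ha, intCast_eq_zero_of_sq ha]
  · obtain ⟨a, ha⟩ := ZMod.intCast_surjective m.2
    obtain ⟨b, hb⟩ := ZMod.intCast_surjective (m.1 - (a : ZMod p) * e)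
    exact ⟨a, b, by ext <;> simp [ha, hb]⟩

theorem isCompl_span_one_mk (t : ZMod (p ^ 2)) :
    IsCompl (ℤ ∙ ((1, (p : ZMod (p ^ 2)) * t) : ZMod p × ZMod (p ^ 2))) (ℤ ∙ (0, 1)) := by
  refine isCompl_span_singleton (fun a b hab => ?_) fun m => ?_
  · have ha : (a : ZMod p) = 0 := by simpa using congrArg Prod.fst hab
    obtain ⟨c, rfl⟩ := (ZMod.intCast_zmod_eq_zero_iff_dvd a p).mp ha
    ext
    · simp [ha]
    · have : (p : ZMod (p ^ 2)) * c * (p * t) = 0 := by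
        rw [mul_mul_mul_comm, natCast_mul_self, zero_mul]
      simpa using this
  · obtain ⟨a, ha⟩ := ZMod.intCast_surjective m.1
    obtain ⟨b, hb⟩ :=
      ZMod.intCast_surjective (m.2 - (a : ZMod (p ^ 2)) * ((p : ZMod (p ^ 2)) * t))
    exact ⟨a, b, by ext <;> simp [ha, hb]⟩

theorem mem_rad_of_not_isUnit {m : ZMod p × ZMod (p ^ 2)} (h1 : m.1 = 0) (h2 : ¬IsUnit m.2) :
    m ∈ rad p := by
  obtain ⟨s, hs⟩ := exists_eq_mul_of_not_isUnit h2
  rw [show m = (0, (p : ZMod (p ^ 2)) * s) from Prod.ext h1 hs]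
  exact mk_zero_mul_mem_rad s

theorem mem_span_one_mk_sup_rad {m : ZMod p × ZMod (p ^ 2)} (hm : ¬IsUnit m.2)
    (t : ZMod (p ^ 2)) : m ∈ (ℤ ∙ ((1, (p : ZMod (p ^ 2)) * t))) ⊔ rad p := by
  obtain ⟨s, hs⟩ := exists_eq_mul_of_not_isUnit hm
  obtain ⟨a, ha⟩ := ZMod.intCast_surjective m.1
  refine mem_sup.mpr ⟨a • (1, (p : ZMod (p ^ 2)) * t), smul_mem _ a (mem_span_singleton_self _),
    _, mk_zero_mul_mem_rad (s - (a : ZMod (p ^ 2)) * t), ?_⟩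
  ext <;> simp [ha, hs]; ring

theorem exists_mk_one_mem {N : Submodule ℤ (ZMod p × ZMod (p ^ 2))} {v : ZMod p × ZMod (p ^ 2)}
    (hv : v ∈ N) (hu : IsUnit v.2) : ∃ e : ZMod p, (e, 1) ∈ N := by
  obtain ⟨c, hc⟩ := ZMod.intCast_surjective (hu.unit⁻¹ : (ZMod (p ^ 2))ˣ).val
  exact ⟨c * v.1, by convert N.smul_mem c hv using 1; ext <;> simp [hc]⟩

theorem exists_one_mk_mem {N : Submodule ℤ (ZMod p × ZMod (p ^ 2))} {v : ZMod p × ZMod (p ^ 2)}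
    (hv : v ∈ N) (h1 : v.1 ≠ 0) (h2 : ¬IsUnit v.2) :
    ∃ t : ZMod (p ^ 2), (1, (p : ZMod (p ^ 2)) * t) ∈ N := by
  obtain ⟨s, hs⟩ := exists_eq_mul_of_not_isUnit h2
  obtain ⟨c, hc⟩ := ZMod.intCast_surjective v.1⁻¹
  exact ⟨c * s, by convert N.smul_mem c hv using 1; ext <;> simp [hc, hs, h1]; ring⟩

theorem le_span_of_mk_one_mem {N : Submodule ℤ (ZMod p × ZMod (p ^ 2))} {e : ZMod p}
    (he : (e, 1) ∈ N) (hN : N ≠ ⊤) : N ≤ ℤ ∙ (e, 1) := by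
  intro m hm
  obtain ⟨a, ha⟩ := ZMod.intCast_surjective m.2
  set d := m.1 - a * e
  have hd : (d, 0) ∈ N := by
    convert N.sub_mem hm (N.smul_mem a he) using 1
    ext <;> simp [d, ha]
  by_cases hd0 : d = 0
  · exact mem_span_singleton.mpr ⟨a, by ext <;> simp [ha, ← sub_eq_zero.mp hd0]⟩
  -- otherwise `N` contains `(1, 0)`, hence both summands of `isCompl_span_mk_one e`
  · obtain ⟨c, hc⟩ := ZMod.intCast_surjective d⁻¹
    have h10 : ((1, 0) : ZMod p × ZMod (p ^ 2)) ∈ N := by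
      convert N.smul_mem c hd using 1
      ext <;> simp [hc, hd0]
    refine absurd (eq_top_iff.mpr ?_) hN
    rw [← (isCompl_span_mk_one e).codisjoint.eq_top]
    exact sup_le (span_le.mpr (by simpa using he)) (span_le.mpr (by simpa using h10))

theorem exists_isDirectSummand_le_le_sup_rad (N : Submodule ℤ (ZMod p × ZMod (p ^ 2))) :
    ∃ K, IsDirectSummand ℤ K ∧ K ≤ N ∧ N ≤ K ⊔ rad p := by
  by_cases hN : N = ⊤
  · exact ⟨⊤, ⟨⊥, isCompl_top_bot⟩, hN ▸ le_rfl, le_sup_of_le_left le_top⟩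
  by_cases hu : ∃ v ∈ N, IsUnit v.2
  · obtain ⟨v, hv, hvu⟩ := hu
    obtain ⟨e, he⟩ := exists_mk_one_mem hv hvu
    exact ⟨_, ⟨_, isCompl_span_mk_one e⟩, span_le.mpr (by simpa using he),
      le_sup_of_le_left (le_span_of_mk_one_mem he hN)⟩
  push Not at hu
  by_cases h1 : ∃ v ∈ N, v.1 ≠ 0
  · obtain ⟨v, hv, hv1⟩ := h1
    obtain ⟨t, ht⟩ := exists_one_mk_mem hv hv1 (hu v hv)
    exact ⟨_, ⟨_, isCompl_span_one_mk t⟩, span_le.mpr (by simpa using ht),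
      fun m hm => mem_span_one_mk_sup_rad (hu m hm) t⟩
  push Not at h1
  exact ⟨⊥, ⟨⊤, isCompl_bot_top⟩, bot_le,
    fun m hm => mem_sup_right (mem_rad_of_not_isUnit (h1 m hm) (hu m hm))⟩

theorem lifting : Lifting ℤ (ZMod p × ZMod (p ^ 2)) :=
  lifting_of_forall_exists_le_sup smallSub_rad exists_isDirectSummand_le_le_sup_rad

theorem not_condD3 : ¬CondD3 ℤ (ZMod p × ZMod (p ^ 2)) := by
  set K := ℤ ∙ ((0, 1) : ZMod p × ZMod (p ^ 2))
  set L := ℤ ∙ ((1, 1) : ZMod p × ZMod (p ^ 2))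
  have hKL : K ⊔ L = ⊤ := by
    have h10 : ((1, 0) : ZMod p × ZMod (p ^ 2)) ∈ K ⊔ L := by
      convert (K ⊔ L).sub_mem (mem_sup_right (mem_span_singleton_self _))
        (mem_sup_left (mem_span_singleton_self _)) using 1
      ext <;> simp
    rw [eq_top_iff, ← (isCompl_span_mk_one 0).codisjoint.eq_top]
    exact sup_le le_sup_left (span_le.mpr (by simpa using h10))
  have hrad : K ⊓ L ≤ rad p := by
    rintro x ⟨hxK, hxL⟩
    obtain ⟨a, rfl⟩ := mem_span_singleton.mp hxK
    obtain ⟨b, hb⟩ := mem_span_singleton.mp hxL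
    have hb1 : (b : ZMod p) = 0 := by simpa using congrArg Prod.fst hb
    obtain ⟨c, rfl⟩ := (ZMod.intCast_zmod_eq_zero_iff_dvd b p).mp hb1
    rw [← hb]
    convert mk_zero_mul_mem_rad (c : ZMod (p ^ 2)) using 1
    ext <;> simp [hb1]
  have hp_mem : ((0 : ZMod p), (p : ZMod (p ^ 2))) ∈ K ⊓ L := by
    refine ⟨mem_span_singleton.mpr ⟨p, ?_⟩, mem_span_singleton.mpr ⟨p, ?_⟩⟩ <;> ext <;> simp
  have hp_ne : ((0 : ZMod p), (p : ZMod (p ^ 2))) ≠ 0 := by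
    intro h
    have := (ZMod.natCast_eq_zero_iff p (p ^ 2)).mp (congrArg Prod.snd h)
    exact absurd (Nat.le_of_dvd hp.out.pos this) (by nlinarith [hp.out.two_le])
  intro hD3
  have hbot := (smallSub_rad.mono hrad).eq_bot_of_isDirectSummand
    (hD3 K L ⟨_, isCompl_span_mk_one 0⟩ ⟨_, isCompl_span_mk_one 1⟩ hKL)
  exact hp_ne ((mem_bot ℤ).mp (hbot ▸ hp_mem))

end Prime

end ZModProd

open ZModProd in
theorem stmt18 (p : ℕ) (hp : p.Prime) :
    Lifting ℤ (ZMod p × ZMod (p ^ 2)) ∧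
      (∀ D : Submodule ℤ (ZMod p × ZMod (p ^ 2)), IsDirectSummand ℤ D →
        HSupplemented ℤ ↥D) ∧
      ¬ CondD3 ℤ (ZMod p × ZMod (p ^ 2)) := by
  have := Fact.mk hp
  exact ⟨lifting, fun D hD => (lifting.of_isDirectSummand hD).hSupplemented, not_condD3⟩
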